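/- arXiv:1110.3286 — 5 statements merged into one kernel-verified Lean document; each statement's English description precedes it below -/
import Mathlib

section
/- (Siegel's Lemma, special case M = 1) Let a₁,…,aₙ be integers, not all zero, with n ≥ 2 and |aᵢ| ≤ B for all i, where B ≥ 1. Then there exists a nonzero integer vector (x₁,…,xₙ) with Σ aᵢxᵢ = 0 and |xᵢ| ≤ (nB)^{1/(n-1)} for all i. -/
/-! The equation `∑ aᵢ xᵢ = 0` is the `1 × n` linear system with coefficient matrix the row `a`,
so this is Mathlib's Siegel lemma `Int.Matrix.exists_ne_zero_int_vec_norm_le'` with `m = 1`;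
the elementwise norm of that row matrix is the sup norm of `a`, which is at most `B`. -/

open Matrix

section

attribute [local instance] Matrix.seminormedAddCommGroup

theorem Int.exists_ne_zero_dotProduct_eq_zero_norm_le {ι : Type*} [Fintype ι]
    (hι : 1 < Fintype.card ι) {a : ι → ℤ} (ha : a ≠ 0) :
    ∃ x : ι → ℤ, x ≠ 0 ∧ a ⬝ᵥ x = 0 ∧
      ‖x‖ ≤ (Fintype.card ι * ‖a‖) ^ ((1 : ℝ) / (Fintype.card ι - 1)) := by
  obtain ⟨x, hx0, hax, hx⟩ := Int.Matrix.exists_ne_zero_int_vec_norm_le' (replicateRow (Fin 1) a)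
    (by simpa using hι) (by simp) (by simpa using ha)
  have hA : ‖replicateRow (Fin 1) a‖ = ‖a‖ := norm_replicateRow a
  refine ⟨x, hx0, congrFun hax 0, ?_⟩
  rwa [hA, Fintype.card_fin, Nat.cast_one] at hx

end

theorem siegel_lemma_one_row_general (n : ℕ) (hn : 2 ≤ n) (a : Fin n → ℤ) (ha : a ≠ 0)
    (B : ℤ) (hab : ∀ i, |a i| ≤ B) :
    ∃ x : Fin n → ℤ, x ≠ 0 ∧ (∑ i, a i * x i) = 0 ∧
      ∀ i, (|x i| : ℝ) ≤ ((n : ℝ) * (B : ℝ)) ^ ((1 : ℝ) / ((n : ℝ) - 1)) := by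
  obtain ⟨x, hx0, hax, hx⟩ :=
    Int.exists_ne_zero_dotProduct_eq_zero_norm_le (by rw [Fintype.card_fin]; omega) ha
  rw [Fintype.card_fin] at hx
  have hB : 0 ≤ (B : ℝ) := by exact_mod_cast (abs_nonneg _).trans (hab ⟨0, by omega⟩)
  have ha_le : ‖a‖ ≤ (B : ℝ) :=
    (pi_norm_le_iff_of_nonneg hB).2 fun i => by
      rw [Int.norm_eq_abs]
      exact_mod_cast hab i
  have hn' : (1 : ℝ) ≤ n - 1 := by
    rw [le_sub_iff_add_le]
    exact_mod_cast hn
  refine ⟨x, hx0, hax, fun i => ?_⟩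
  calc (|x i| : ℝ) = ‖x i‖ := (Int.norm_eq_abs _).symm
    _ ≤ ‖x‖ := norm_le_pi_norm x i
    _ ≤ _ := hx
    _ ≤ _ := by gcongr

/-- Siegel's Lemma, special case M = 1: if a₁,…,aₙ are integers, not all zero, with
n ≥ 2 and |aᵢ| ≤ B (B ≥ 1), then there is a nonzero integer vector x with
Σ aᵢxᵢ = 0 and |xᵢ| ≤ (nB)^{1/(n-1)} for all i. -/
theorem siegel_lemma_one_row (n : ℕ) (hn : 2 ≤ n) (a : Fin n → ℤ) (ha : a ≠ 0)
    (B : ℤ) (hB : 1 ≤ B) (hab : ∀ i, |a i| ≤ B) :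
    ∃ x : Fin n → ℤ, x ≠ 0 ∧ (∑ i, a i * x i) = 0 ∧
      ∀ i, (|x i| : ℝ) ≤ ((n : ℝ) * (B : ℝ)) ^ ((1 : ℝ) / ((n : ℝ) - 1)) :=
  siegel_lemma_one_row_general n hn a ha B hab
end

section
/- Let n ≥ 2 and let φ: ℤⁿ → ℤ be a group homomorphism that is nonzero on every nonzero element of the cube [-R,R]ⁿ (R a positive natural number). Let C = max_i |φ(eᵢ)| where e₁,…,eₙ is the standard basis. Then C ≥ (R - n)^{n-1} / nⁿ. -/
/-!
If `φ` vanishes nowhere on the nonzero points of the cube `[-R,R]ⁿ`, it is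
injective on the box `[0,R]ⁿ`, because differences of points of the box lie in the cube. The
`(R+1)ⁿ` values it takes there are integers `φ s` whose pairwise differences `φ (s - t)` are at
most `nRC` in absolute value, so `(R+1)ⁿ ≤ nRC + 1`. Hence `Rⁿ⁻¹ ≤ nC`, and since
`|R - n| ≤ Rn`, also `(R-n)ⁿ⁻¹ ≤ (Rn)ⁿ⁻¹ ≤ nⁿ C`.
-/

open Finset

theorem Int.card_le_of_sub_le {S : Finset ℤ} (hS : S.Nonempty) {D : ℤ}
    (h : ∀ x ∈ S, ∀ y ∈ S, x - y ≤ D) : (#S : ℤ) ≤ D + 1 := by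
  set m := S.min' hS
  have hD : 0 ≤ D := by simpa using h m (S.min'_mem hS) m (S.min'_mem hS)
  have hsub : S ⊆ Icc m (m + D) := fun x hx =>
    mem_Icc.2 ⟨S.min'_le x hx, by linarith [h x hx m (S.min'_mem hS)]⟩
  have hcard := card_le_card hsub
  rw [Int.card_Icc, show m + D + 1 - m = D + 1 by ring] at hcard
  omega

theorem abs_sub_apply_le_of_mem_Icc {ι : Type*} {R : ℤ} {s t : ι → ℤ}
    (hs : s ∈ Set.Icc 0 (fun _ => R)) (ht : t ∈ Set.Icc 0 (fun _ => R)) (i : ι) :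
    |(s - t) i| ≤ R :=
  abs_sub_le_of_nonneg_of_le (hs.1 i) (hs.2 i) (ht.1 i) (ht.2 i)

namespace AddMonoidHom

variable {ι : Type*} (φ : (ι → ℤ) →+ ℤ)

theorem injOn_Icc_of_ne_zero {R : ℤ} (hφ : ∀ t, t ≠ 0 → (∀ i, |t i| ≤ R) → φ t ≠ 0) :
    Set.InjOn φ (Set.Icc 0 (fun _ => R)) := by
  intro s hs t ht hst
  by_contra hne
  exact hφ (s - t) (sub_ne_zero.2 hne) (abs_sub_apply_le_of_mem_Icc hs ht) (by simp [hst])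

variable [Fintype ι] [DecidableEq ι]

theorem eq_sum_mul_single (t : ι → ℤ) : φ t = ∑ i, t i * φ (Pi.single i 1) := by
  conv_lhs => rw [← univ_sum_single t]
  simp only [map_sum, ← smul_eq_mul, ← map_zsmul, ← Pi.single_smul]
  simp

theorem abs_le_card_mul_of_abs_le {R C : ℤ} (hC : ∀ i, |φ (Pi.single i 1)| ≤ C)
    {t : ι → ℤ} (ht : ∀ i, |t i| ≤ R) : |φ t| ≤ Fintype.card ι * R * C := by
  calc |φ t| ≤ ∑ i, |t i| * |φ (Pi.single i 1)| := by
        simpa only [eq_sum_mul_single φ t, abs_mul] using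
          abs_sum_le_sum_abs (fun i => t i * φ (Pi.single i 1)) univ
    _ ≤ ∑ _i : ι, R * C :=
        sum_le_sum fun i _ => mul_le_mul (ht i) (hC i) (abs_nonneg _) ((abs_nonneg _).trans (ht i))
    _ = Fintype.card ι * R * C := by simp [mul_assoc]

theorem succ_pow_le_card_mul_add_one {R C : ℤ} (hR : 0 ≤ R)
    (hφ : ∀ t, t ≠ 0 → (∀ i, |t i| ≤ R) → φ t ≠ 0) (hC : ∀ i, |φ (Pi.single i 1)| ≤ C) :
    (R + 1) ^ Fintype.card ι ≤ Fintype.card ι * R * C + 1 := by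
  set box : Finset (ι → ℤ) := Icc 0 (fun _ => R)
  have hbox : (#box : ℤ) = (R + 1) ^ Fintype.card ι := by
    simp [box, Pi.card_Icc, Int.card_Icc, Int.toNat_of_nonneg (by omega : 0 ≤ R + 1)]
  have hinj : Set.InjOn φ box := by
    simpa only [box, coe_Icc] using injOn_Icc_of_ne_zero φ hφ
  rw [← hbox, ← card_image_of_injOn hinj]
  refine Int.card_le_of_sub_le ⟨φ 0, mem_image_of_mem φ (mem_Icc.2 ⟨le_rfl, fun _ => hR⟩)⟩ ?_
  simp only [mem_image]
  rintro _ ⟨s, hs, rfl⟩ _ ⟨t, ht, rfl⟩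
  rw [← map_sub]
  refine (le_abs_self _).trans (abs_le_card_mul_of_abs_le φ hC fun i => ?_)
  exact abs_sub_apply_le_of_mem_Icc (by simpa [box] using hs) (by simpa [box] using ht) i

end AddMonoidHom

theorem sub_pow_pred_le_of_succ_pow_le {R C : ℝ} {n : ℕ} (hR : 1 ≤ R) (hn : n ≠ 0)
    (h : (R + 1) ^ n ≤ n * R * C + 1) : (R - n) ^ (n - 1) ≤ n ^ n * C := by
  obtain ⟨m, rfl⟩ : ∃ m, n = m + 1 := ⟨n - 1, by omega⟩
  have hpow : R ^ (m + 1) ≤ (m + 1) * R * C := by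
    have := pow_add_pow_le (zero_le_one.trans hR) zero_le_one hn
    rw [one_pow] at this
    push_cast at h
    linarith
  have hpred : R ^ m ≤ (m + 1) * C := by
    refine le_of_mul_le_mul_left ?_ (zero_lt_one.trans_le hR)
    linarith [pow_succ' R m]
  have hdist : |R - (m + 1)| ≤ R * (m + 1) := by
    rw [abs_le]
    constructor <;> nlinarith [(m.cast_nonneg : (0 : ℝ) ≤ m)]
  push_cast
  calc (R - (m + 1)) ^ (m + 1 - 1) = (R - (m + 1)) ^ m := by simp
    _ ≤ |R - (m + 1)| ^ m := (le_abs_self _).trans (abs_pow _ _).le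
    _ ≤ (R * (m + 1)) ^ m := pow_le_pow_left₀ (abs_nonneg _) hdist m
    _ = R ^ m * (m + 1) ^ m := mul_pow _ _ _
    _ ≤ ((m + 1) * C) * (m + 1) ^ m := mul_le_mul_of_nonneg_right hpred (by positivity)
    _ = (m + 1) ^ (m + 1) * C := by ring

theorem discriminating_lower_bound_general (n R : ℕ) (hR : 0 < R)
    (φ : (Fin n → ℤ) →+ ℤ)
    (hφ : ∀ t : Fin n → ℤ, t ≠ 0 → (∀ i, |t i| ≤ (R : ℤ)) → φ t ≠ 0)
    (C : ℤ) (hC : IsGreatest {c : ℤ | ∃ i : Fin n, c = |φ (Pi.single i 1)|} C) :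
    ((R : ℝ) - (n : ℝ)) ^ (n - 1) / (n : ℝ) ^ n ≤ (C : ℝ) := by
  obtain ⟨⟨i, -⟩, hmax⟩ := hC
  have hn : n ≠ 0 := i.pos.ne'
  have hcount := φ.succ_pow_le_card_mul_add_one (by positivity) hφ fun j => hmax ⟨j, rfl⟩
  rw [Fintype.card_fin] at hcount
  rw [div_le_iff₀ (by positivity), mul_comm]
  exact sub_pow_pred_le_of_succ_pow_le (by exact_mod_cast hR) hn (by exact_mod_cast hcount)

/-- Lower bound for discriminating homomorphisms ℤⁿ → ℤ: if φ is nonzero on every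
nonzero element of the cube [-R,R]ⁿ and C = max_i |φ(eᵢ)|, then C ≥ (R-n)^{n-1}/nⁿ. -/
theorem discriminating_lower_bound (n R : ℕ) (hn : 2 ≤ n) (hR : 0 < R)
    (φ : (Fin n → ℤ) →+ ℤ)
    (hφ : ∀ t : Fin n → ℤ, t ≠ 0 → (∀ i, |t i| ≤ (R : ℤ)) → φ t ≠ 0)
    (C : ℤ) (hC : IsGreatest {c : ℤ | ∃ i : Fin n, c = |φ (Pi.single i 1)|} C) :
    ((R : ℝ) - (n : ℝ)) ^ (n - 1) / (n : ℝ) ^ n ≤ (C : ℝ) :=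
  discriminating_lower_bound_general n R hR φ hφ C hC
end

section
/- The ℤ-discriminating complexity of ℤⁿ with respect to the standard basis is asymptotically dominated by the polynomial R ↦ R^{n-1}: there is a constant K such that for every R, there exists a homomorphism φ_R: ℤⁿ → ℤ with φ_R(t) ≠ 0 for every nonzero t of word length at most R (with respect to the standard basis), and max_i |φ_R(eᵢ)| ≤ K·R^{n-1} + K. -/
/-!
Encode `t` by the integer `∑ tᵢ bⁱ` in base `b = R + 1`. If `∑ |tᵢ| ≤ R < b`, each digit `tᵢ`
has absolute value below `b`, so the encoding vanishes only at `t = 0`: if it vanishes, the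
lowest digit is divisible by `b`, hence zero, and one inducts on the number of digits. The generators go to powers `bⁱ`
with `i ≤ n - 1`, which are bounded by `(R + 1)ⁿ⁻¹ ≤ 2ⁿ⁻² (Rⁿ⁻¹ + 1)`.
-/

open Finset

def radixHom (n : ℕ) (b : ℤ) : (Fin n → ℤ) →+ ℤ :=
  AddMonoidHom.mk' (fun t => ∑ i, t i * b ^ (i : ℕ)) fun s t => by
    simp only [Pi.add_apply, add_mul, sum_add_distrib]

lemma radixHom_apply {n : ℕ} (b : ℤ) (t : Fin n → ℤ) :
    radixHom n b t = ∑ i, t i * b ^ (i : ℕ) := rfl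

lemma radixHom_single {n : ℕ} (b : ℤ) (i : Fin n) : radixHom n b (Pi.single i 1) = b ^ (i : ℕ) := by
  rw [radixHom_apply, sum_eq_single i (fun j _ hj => by simp [hj]) (by simp)]
  simp

lemma radixHom_succ {n : ℕ} (b : ℤ) (t : Fin (n + 1) → ℤ) :
    radixHom (n + 1) b t = t 0 + b * radixHom n b (Fin.tail t) := by
  simp only [radixHom_apply, Fin.sum_univ_succ, Fin.val_zero, pow_zero, mul_one, Fin.val_succ,
    pow_succ, mul_sum, Fin.tail]
  congr 1
  exact sum_congr rfl fun i _ => by ring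

lemma eq_zero_of_radixHom_eq_zero {n : ℕ} {b : ℤ} {t : Fin n → ℤ} (hb : ∑ i, |t i| < b)
    (ht : radixHom n b t = 0) : t = 0 := by
  induction n with
  | zero => exact Subsingleton.elim _ _
  | succ n ih =>
    rw [Fin.sum_univ_succ] at hb
    have htail_nonneg : 0 ≤ ∑ i, |t (Fin.succ i)| := sum_nonneg fun i _ => abs_nonneg _
    have htail_lt : ∑ i, |t (Fin.succ i)| < b := by linarith [abs_nonneg (t 0)]
    have hb0 : 0 < b := htail_nonneg.trans_lt htail_lt
    rw [radixHom_succ] at ht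
    have hhead : t 0 = 0 := by
      have hdvd : b ∣ t 0 := ⟨-radixHom n b (Fin.tail t), by linarith⟩
      exact Int.eq_zero_of_abs_lt_dvd hdvd (by linarith)
    have htail : Fin.tail t = 0 := by
      refine ih htail_lt ?_
      rw [hhead, zero_add] at ht
      exact (mul_eq_zero.mp ht).resolve_left hb0.ne'
    funext i
    exact Fin.cases hhead (congrFun htail) i

lemma natCast_add_one_pow_le (R k : ℕ) : ((R : ℤ) + 1) ^ k ≤ 2 ^ (k - 1) * (R : ℤ) ^ k + 2 ^ (k - 1) := by
  have := add_pow_le (Int.natCast_nonneg R) zero_le_one k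
  rwa [one_pow, mul_add, mul_one] at this

theorem free_abelian_upper_bound_general (n : ℕ) :
    ∃ K : ℕ, ∀ R : ℕ, ∃ φ : (Fin n → ℤ) →+ ℤ,
      (∀ t : Fin n → ℤ, t ≠ 0 → (∑ i, |t i|) ≤ (R : ℤ) → φ t ≠ 0) ∧
      ∀ i, |φ (Pi.single i 1)| ≤ (K : ℤ) * (R : ℤ) ^ (n - 1) + (K : ℤ) := by
  refine ⟨2 ^ (n - 1 - 1), fun R => ⟨radixHom n ((R : ℤ) + 1), ?_, fun i => ?_⟩⟩
  · intro t ht hR h0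
    exact ht (eq_zero_of_radixHom_eq_zero (by linarith) h0)
  · have hb : (1 : ℤ) ≤ R + 1 := by linarith [Int.natCast_nonneg R]
    rw [radixHom_single, abs_of_nonneg (by positivity)]
    push_cast
    calc ((R : ℤ) + 1) ^ (i : ℕ) ≤ ((R : ℤ) + 1) ^ (n - 1) := pow_le_pow_right₀ hb (by omega)
      _ ≤ _ := natCast_add_one_pow_le R (n - 1)

/-- The ℤ-discriminating complexity of ℤⁿ is asymptotically dominated by R^{n-1}:
there is K such that for every R there is a homomorphism φ_R : ℤⁿ → ℤ nonzero on
all nonzero elements of word length at most R, with max_i |φ_R(eᵢ)| ≤ K·R^{n-1}+K. -/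
theorem free_abelian_upper_bound (n : ℕ) (hn : 1 ≤ n) :
    ∃ K : ℕ, ∀ R : ℕ, ∃ φ : (Fin n → ℤ) →+ ℤ,
      (∀ t : Fin n → ℤ, t ≠ 0 → (∑ i, |t i|) ≤ (R : ℤ) → φ t ≠ 0) ∧
      ∀ i, |φ (Pi.single i 1)| ≤ (K : ℤ) * (R : ℤ) ^ (n - 1) + (K : ℤ) :=
  free_abelian_upper_bound_general n
end

section
/- The ℤ-discriminating complexity of ℤⁿ is asymptotically equivalent to R^{n-1}: the minimal complexity C(R) of a homomorphism ℤⁿ → ℤ which is nonzero on all nonzero elements of the radius-R word-metric ball satisfies C ≈ (R ↦ R^{n-1}). -/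
/-!
Upper bound: `t ↦ ∑ (R + 1) ^ i * t i` has complexity `(R + 1) ^ (n - 1)` and does not vanish on
the nonzero points of the `R`-ball, since a base-`(R + 1)` expansion whose digits have absolute value
at most `R` is zero only if all digits are.

Lower bound: if `φ` has complexity `c` and does not vanish on the nonzero points of the `nR`-ball, it
is injective on the box `{0, …, R}ⁿ` (differences of box points lie in that ball) and maps the box
into `[-ncR, ncR]`. Hence `(R + 1) ^ n ≤ 2ncR + 1`, which forces `R ^ (n - 1) ≤ 2nc + 1`.
-/

open Finset

section FiniteRank

variable {ι : Type*} [Fintype ι]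

def DiscriminatesBall (φ : (ι → ℤ) →+ ℤ) (R : ℤ) : Prop :=
  ∀ t : ι → ℤ, t ≠ 0 → ∑ i, |t i| ≤ R → φ t ≠ 0

theorem DiscriminatesBall.mono {φ : (ι → ℤ) →+ ℤ} {R S : ℤ} (hφ : DiscriminatesBall φ R)
    (hSR : S ≤ R) : DiscriminatesBall φ S :=
  fun t ht htS => hφ t ht (htS.trans hSR)

theorem AddMonoidHom.apply_eq_sum_mul_single [DecidableEq ι] (φ : (ι → ℤ) →+ ℤ) (t : ι → ℤ) :
    φ t = ∑ i, t i * φ (Pi.single i 1) := by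
  conv_lhs => rw [← univ_sum_single t, map_sum]
  refine sum_congr rfl fun i _ => ?_
  rw [← smul_eq_mul, ← map_zsmul, ← Pi.single_smul', smul_eq_mul, mul_one]

theorem AddMonoidHom.abs_apply_le [DecidableEq ι] {φ : (ι → ℤ) →+ ℤ} {c : ℤ}
    (hc : ∀ i, |φ (Pi.single i 1)| ≤ c) (t : ι → ℤ) : |φ t| ≤ c * ∑ i, |t i| := by
  rw [φ.apply_eq_sum_mul_single, mul_sum]
  refine (abs_sum_le_sum_abs _ _).trans (sum_le_sum fun i _ => ?_)
  rw [abs_mul, mul_comm c]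
  exact mul_le_mul_of_nonneg_left (hc i) (abs_nonneg _)

theorem sum_abs_le_card_mul {t : ι → ℤ} {R : ℤ} (ht : ∀ i, |t i| ≤ R) :
    ∑ i, |t i| ≤ Fintype.card ι * R := by
  simpa using sum_le_card_nsmul univ (fun i => |t i|) R fun i _ => ht i

theorem succ_pow_card_le_of_discriminatesBall [DecidableEq ι] {φ : (ι → ℤ) →+ ℤ} {R c : ℕ}
    (hφ : DiscriminatesBall φ (Fintype.card ι * R)) (hc : ∀ i, |φ (Pi.single i 1)| ≤ c) :
    (R + 1) ^ Fintype.card ι ≤ 2 * Fintype.card ι * c * R + 1 := by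
  set box := Fintype.piFinset fun _ : ι => Icc (0 : ℤ) R
  have mem_box {t : ι → ℤ} (ht : t ∈ box) (i : ι) : 0 ≤ t i ∧ t i ≤ R :=
    mem_Icc.mp (Fintype.mem_piFinset.mp ht i)
  set M := Fintype.card ι * c * R
  have hmaps : ∀ t ∈ box, φ t ∈ Icc (-(M : ℤ)) M := fun t ht => by
    have hsum := sum_abs_le_card_mul fun i => abs_le.mpr
      ⟨by linarith [mem_box ht i], (mem_box ht i).2⟩
    have := (φ.abs_apply_le hc t).trans (mul_le_mul_of_nonneg_left hsum (by positivity))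
    exact mem_Icc.mpr (abs_le.mp (by push_cast [M]; linarith))
  have hinj : Set.InjOn φ box := fun t ht s hs hts => by
    by_contra hne
    refine hφ (t - s) (sub_ne_zero.mpr hne) (sum_abs_le_card_mul fun i => ?_) (by simp [hts])
    have := mem_box ht i
    have := mem_box hs i
    rw [Pi.sub_apply, abs_le]
    constructor <;> linarith
  have hcard := card_le_card_of_injOn φ hmaps hinj
  simp only [box, Fintype.card_piFinset, Int.card_Icc, prod_const, card_univ] at hcard
  rw [show ((R : ℤ) + 1 - 0).toNat = R + 1 by omega,
    show (M + 1 - -M : ℤ).toNat = 2 * M + 1 by omega, ← mul_assoc, ← mul_assoc] at hcard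
  exact hcard

end FiniteRank

theorem eq_zero_of_sum_pow_mul_eq_zero {B : ℤ} : ∀ {n : ℕ} {b : Fin n → ℤ},
    (∀ i, |b i| < B) → ∑ i : Fin n, B ^ i.val * b i = 0 → b = 0
  | 0, _, _, _ => Subsingleton.elim _ _
  | n + 1, b, hb, hsum => by
    rw [Fin.sum_univ_succ] at hsum
    simp only [Fin.val_zero, pow_zero, one_mul, Fin.val_succ, pow_succ, mul_comm _ B,
      mul_assoc, ← mul_sum] at hsum
    have hB : 0 < B := (abs_nonneg _).trans_lt (hb 0)
    have hb₀ : b 0 = 0 := Int.eq_zero_of_abs_lt_dvd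
      ⟨_, (eq_neg_of_add_eq_zero_left hsum).trans (mul_neg _ _).symm⟩ (hb 0)
    rw [hb₀, zero_add, mul_eq_zero, or_iff_right hB.ne'] at hsum
    have htail : Fin.tail b = 0 := eq_zero_of_sum_pow_mul_eq_zero (fun i => hb i.succ) hsum
    rw [← Fin.cons_self_tail b, hb₀, htail]
    exact Matrix.cons_zero_zero

def baseEncoding (B : ℤ) (n : ℕ) : (Fin n → ℤ) →+ ℤ :=
  AddMonoidHom.mk' (fun t => ∑ i : Fin n, B ^ i.val * t i) fun s t => by
    simp only [Pi.add_apply, mul_add, sum_add_distrib]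

theorem baseEncoding_apply (B : ℤ) {n : ℕ} (t : Fin n → ℤ) :
    baseEncoding B n t = ∑ i : Fin n, B ^ i.val * t i := rfl

theorem baseEncoding_single (B : ℤ) {n : ℕ} (i : Fin n) :
    baseEncoding B n (Pi.single i 1) = B ^ i.val := by
  simp [baseEncoding_apply, Pi.single_apply]

theorem discriminatesBall_baseEncoding (n R : ℕ) :
    DiscriminatesBall (baseEncoding (R + 1) n) R := fun t ht htR hzero =>
  ht <| eq_zero_of_sum_pow_mul_eq_zero
    (fun i => (single_le_sum (fun j _ => abs_nonneg (t j)) (mem_univ i)).trans_lt (by omega))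
    hzero

theorem abs_baseEncoding_single_le (n R : ℕ) (i : Fin n) :
    |baseEncoding (R + 1) n (Pi.single i 1)| ≤ ((R + 1) ^ (n - 1) : ℕ) := by
  rw [baseEncoding_single, abs_of_nonneg (by positivity)]
  push_cast
  exact pow_le_pow_right₀ (by omega) (by omega)

theorem Nat.pow_pred_le_of_succ_pow_le {R n A : ℕ} (h : (R + 1) ^ n ≤ A * R + 1) :
    R ^ (n - 1) ≤ A + 1 := by
  obtain _ | m := n
  · simp
  obtain rfl | hR := R.eq_zero_or_pos
  · exact (zero_pow_le_one m).trans (Nat.le_add_left 1 A)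
  have hmul : R ^ m * R + R ^ m ≤ A * R + 1 := by
    refine le_trans ?_ h
    rw [pow_succ, ← mul_add_one]
    exact Nat.mul_le_mul_right _ (Nat.pow_le_pow_left (Nat.le_succ R) m)
  have : R ^ m ≤ A := Nat.le_of_mul_le_mul_right (by linarith [Nat.one_le_pow m R hR]) hR
  exact this.trans (Nat.le_succ A)

theorem Nat.succ_pow_le_two_mul_pow_add_one (R m : ℕ) : (R + 1) ^ m ≤ (2 * R) ^ m + 1 := by
  obtain rfl | hR := R.eq_zero_or_pos
  · simp
  exact (Nat.pow_le_pow_left (by omega) m).trans (Nat.le_succ _)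

theorem free_abelian_complexity_general (n : ℕ) (C : ℕ → ℕ)
    (hC : ∀ R : ℕ, C R = sInf {c : ℕ | ∃ φ : (Fin n → ℤ) →+ ℤ,
        (∀ t : Fin n → ℤ, t ≠ 0 → (∑ i, |t i|) ≤ (R : ℤ) → φ t ≠ 0) ∧
        ∀ i, |φ (Pi.single i 1)| ≤ (c : ℤ)}) :
    (∃ K : ℕ, ∀ R : ℕ, C R ≤ K * (K * R) ^ (n - 1) + K) ∧
    (∃ K : ℕ, ∀ R : ℕ, R ^ (n - 1) ≤ K * C (K * R) + K) := by
  have hbase (R : ℕ) : DiscriminatesBall (baseEncoding (R + 1) n) R ∧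
      ∀ i, |baseEncoding (R + 1) n (Pi.single i 1)| ≤ ((R + 1) ^ (n - 1) : ℕ) :=
    ⟨discriminatesBall_baseEncoding n R, abs_baseEncoding_single_le n R⟩
  have hupper (R : ℕ) : C R ≤ (R + 1) ^ (n - 1) := hC R ▸ Nat.sInf_le ⟨_, hbase R⟩
  have hattained (R : ℕ) : C R ∈ {c : ℕ | ∃ φ : (Fin n → ℤ) →+ ℤ,
      DiscriminatesBall φ R ∧ ∀ i, |φ (Pi.single i 1)| ≤ c} :=
    hC R ▸ Nat.sInf_mem ⟨_, _, hbase R⟩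
  refine ⟨⟨2, fun R => (hupper R).trans ?_⟩, ⟨2 * n + 1, fun R => ?_⟩⟩
  · have := Nat.succ_pow_le_two_mul_pow_add_one R (n - 1)
    omega
  obtain ⟨φ, hφ, hc⟩ := hattained ((2 * n + 1) * R)
  have hcount := succ_pow_card_le_of_discriminatesBall (R := R)
    (hφ.mono (by push_cast [Fintype.card_fin]; nlinarith)) hc
  rw [Fintype.card_fin] at hcount
  have := Nat.pow_pred_le_of_succ_pow_le hcount
  nlinarith

/-- The ℤ-discriminating complexity of ℤⁿ is asymptotically equivalent to R^{n-1}. -/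
theorem free_abelian_complexity (n : ℕ) (hn : 2 ≤ n) (C : ℕ → ℕ)
    (hC : ∀ R : ℕ, C R = sInf {c : ℕ | ∃ φ : (Fin n → ℤ) →+ ℤ,
        (∀ t : Fin n → ℤ, t ≠ 0 → (∑ i, |t i|) ≤ (R : ℤ) → φ t ≠ 0) ∧
        ∀ i, |φ (Pi.single i 1)| ≤ (c : ℤ)}) :
    (∃ K : ℕ, ∀ R : ℕ, C R ≤ K * (K * R) ^ (n - 1) + K) ∧
    (∃ K : ℕ, ∀ R : ℕ, R ^ (n - 1) ≤ K * C (K * R) + K) :=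
  free_abelian_complexity_general n C hC
end

section
/- In a δ-hyperbolic geodesic metric space, for points x, y, z and a broken geodesic [x,y] ∪ [y,z] (concatenation of geodesics from x to y and y to z), every subpath of the broken geodesic is a (1, 2⟨x|z⟩_y + 2δ)-quasigeodesic, where ⟨x|z⟩_y = ½(d(y,x) + d(y,z) − d(x,z)) is the Gromov product. -/
/-!
Two points on the same leg of the broken geodesic are exactly their parameter distance apart.
For `u ∈ [x,y]` and `v ∈ [y,z]` the parameter distance is `d(u,y) + d(y,v)`, and the triangle
inequality `d(x,z) ≤ d(x,u) + d(u,v) + d(v,z)` shows that this overshoots `d(u,v)` by at most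
`d(y,x) + d(y,z) - d(x,z) = 2⟨x|z⟩_y`.
-/

/-- `f` parameterizes a geodesic from `x` to `y` by arc length on `[0, dist x y]`. -/
def IsGeodesicParam {X : Type*} [MetricSpace X] (f : ℝ → X) (x y : X) : Prop :=
  f 0 = x ∧ f (dist x y) = y ∧
    ∀ s ∈ Set.Icc (0 : ℝ) (dist x y), ∀ t ∈ Set.Icc (0 : ℝ) (dist x y),
      dist (f s) (f t) = |s - t|

/-- δ-hyperbolicity via thin triangles: each side of a geodesic triangle is contained
in the δ-neighborhood of the union of the other two sides. -/
def ThinTriangles (X : Type*) [MetricSpace X] (δ : ℝ) : Prop :=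
  ∀ (x y z : X) (f g h : ℝ → X),
    IsGeodesicParam f x y → IsGeodesicParam g y z → IsGeodesicParam h x z →
    ∀ t ∈ Set.Icc (0 : ℝ) (dist x z), ∃ s : ℝ,
      (s ∈ Set.Icc (0 : ℝ) (dist x y) ∧ dist (h t) (f s) ≤ δ) ∨
      (s ∈ Set.Icc (0 : ℝ) (dist y z) ∧ dist (h t) (g s) ≤ δ)

open Set

lemma abs_dist_sub_dist_add_dist_le {X : Type*} [PseudoMetricSpace X] {x y z u v : X}
    (hu : dist x u + dist u y = dist x y) (hv : dist y v + dist v z = dist y z) :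
    |dist u v - (dist u y + dist y v)| ≤ dist y x + dist y z - dist x z := by
  rw [abs_sub_le_iff]
  constructor <;> linarith [dist_triangle u y v, dist_triangle4 x u v z, dist_comm x y]

namespace IsGeodesicParam

variable {X : Type*} [MetricSpace X] {f : ℝ → X} {x y : X} {s t : ℝ}

lemma dist_apply_apply (hf : IsGeodesicParam f x y) (hs : s ∈ Icc 0 (dist x y))
    (ht : t ∈ Icc 0 (dist x y)) : dist (f s) (f t) = |s - t| :=
  hf.2.2 s hs t ht

lemma dist_left_apply (hf : IsGeodesicParam f x y) (hs : s ∈ Icc 0 (dist x y)) :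
    dist x (f s) = s := by
  rw [← hf.1, hf.dist_apply_apply ⟨le_rfl, dist_nonneg⟩ hs, zero_sub, abs_neg, abs_of_nonneg hs.1]

lemma dist_apply_right (hf : IsGeodesicParam f x y) (hs : s ∈ Icc 0 (dist x y)) :
    dist (f s) y = dist x y - s := by
  conv_lhs => rw [← hf.2.1]
  rw [hf.dist_apply_apply hs ⟨dist_nonneg, le_rfl⟩, abs_of_nonpos (by linarith [hs.2])]
  ring

lemma dist_left_add_dist_right (hf : IsGeodesicParam f x y) (hs : s ∈ Icc 0 (dist x y)) :
    dist x (f s) + dist (f s) y = dist x y := by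
  rw [hf.dist_left_apply hs, hf.dist_apply_right hs]
  ring

end IsGeodesicParam

noncomputable def concatPath {X : Type*} (f g : ℝ → X) (a : ℝ) (t : ℝ) : X :=
  if t ≤ a then f t else g (t - a)

section BrokenGeodesic

variable {X : Type*} [MetricSpace X] {x y z : X} {f g : ℝ → X}

lemma abs_dist_concatPath_sub_le_of_le (hf : IsGeodesicParam f x y) (hg : IsGeodesicParam g y z)
    {s t : ℝ} (hs : 0 ≤ s) (ht : t ≤ dist x y + dist y z) (hst : s ≤ t) :
    |dist (concatPath f g (dist x y) s) (concatPath f g (dist x y) t) - (t - s)|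
      ≤ dist y x + dist y z - dist x z := by
  have hgromov : 0 ≤ dist y x + dist y z - dist x z := by
    linarith [dist_triangle x y z, dist_comm x y]
  unfold concatPath
  by_cases hta : t ≤ dist x y
  · rw [if_pos (hst.trans hta), if_pos hta,
      hf.dist_apply_apply ⟨hs, hst.trans hta⟩ ⟨hs.trans hst, hta⟩, abs_sub_comm s t,
      abs_of_nonneg (sub_nonneg.2 hst), sub_self, abs_zero]
    exact hgromov
  have htg : t - dist x y ∈ Icc 0 (dist y z) := ⟨by linarith, by linarith⟩
  rw [if_neg hta]
  by_cases hsa : s ≤ dist x y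
  · have hsf : s ∈ Icc 0 (dist x y) := ⟨hs, hsa⟩
    rw [if_pos hsa]
    have hcorner := abs_dist_sub_dist_add_dist_le (hf.dist_left_add_dist_right hsf)
      (hg.dist_left_add_dist_right htg)
    rwa [hf.dist_apply_right hsf, hg.dist_left_apply htg, show
      dist x y - s + (t - dist x y) = t - s by ring] at hcorner
  · have hsg : s - dist x y ∈ Icc 0 (dist y z) := ⟨by linarith, by linarith⟩
    rw [if_neg hsa, hg.dist_apply_apply hsg htg, sub_sub_sub_cancel_right, abs_sub_comm s t,
      abs_of_nonneg (sub_nonneg.2 hst), sub_self, abs_zero]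
    exact hgromov

lemma abs_dist_concatPath_sub_le (hf : IsGeodesicParam f x y) (hg : IsGeodesicParam g y z)
    {s t : ℝ} (hs : s ∈ Icc 0 (dist x y + dist y z)) (ht : t ∈ Icc 0 (dist x y + dist y z)) :
    |dist (concatPath f g (dist x y) s) (concatPath f g (dist x y) t) - dist s t|
      ≤ dist y x + dist y z - dist x z := by
  rw [Real.dist_eq]
  rcases le_total s t with hst | hts
  · rw [abs_sub_comm s t, abs_of_nonneg (sub_nonneg.2 hst)]
    exact abs_dist_concatPath_sub_le_of_le hf hg hs.1 ht.2 hst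
  · rw [abs_of_nonneg (sub_nonneg.2 hts), dist_comm]
    exact abs_dist_concatPath_sub_le_of_le hf hg ht.1 hs.2 hts

end BrokenGeodesic

theorem broken_geodesic_quasigeodesic_general {X : Type*} [MetricSpace X]
    (δ : ℝ) (hδ : 0 ≤ δ)
    (x y z : X) (f g : ℝ → X)
    (hf : IsGeodesicParam f x y) (hg : IsGeodesicParam g y z)
    (p : ℝ → X) (hp : ∀ t : ℝ, p t = if t ≤ dist x y then f t else g (t - dist x y)) :
    ∀ s ∈ Set.Icc (0 : ℝ) (dist x y + dist y z),
      ∀ t ∈ Set.Icc (0 : ℝ) (dist x y + dist y z),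
        |s - t| - (2 * ((dist y x + dist y z - dist x z) / 2) + 2 * δ) ≤ dist (p s) (p t) ∧
        dist (p s) (p t) ≤ |s - t| + (2 * ((dist y x + dist y z - dist x z) / 2) + 2 * δ) := by
  obtain rfl : p = concatPath f g (dist x y) := funext hp
  intro s hs t ht
  have hbound := abs_dist_concatPath_sub_le hf hg hs ht
  rw [Real.dist_eq, abs_sub_le_iff] at hbound
  constructor <;> linarith

/-- In a δ-hyperbolic geodesic space, every subpath of the broken geodesic
[x,y] ∪ [y,z] is a (1, 2⟨x|z⟩_y + 2δ)-quasigeodesic. -/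
theorem broken_geodesic_quasigeodesic {X : Type*} [MetricSpace X]
    (δ : ℝ) (hδ : 0 ≤ δ)
    (hgeo : ∀ x y : X, ∃ f : ℝ → X, IsGeodesicParam f x y)
    (hhyp : ThinTriangles X δ)
    (x y z : X) (f g : ℝ → X)
    (hf : IsGeodesicParam f x y) (hg : IsGeodesicParam g y z)
    (p : ℝ → X) (hp : ∀ t : ℝ, p t = if t ≤ dist x y then f t else g (t - dist x y)) :
    ∀ s ∈ Set.Icc (0 : ℝ) (dist x y + dist y z),
      ∀ t ∈ Set.Icc (0 : ℝ) (dist x y + dist y z),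
        |s - t| - (2 * ((dist y x + dist y z - dist x z) / 2) + 2 * δ) ≤ dist (p s) (p t) ∧
        dist (p s) (p t) ≤ |s - t| + (2 * ((dist y x + dist y z - dist x z) / 2) + 2 * δ) :=
  broken_geodesic_quasigeodesic_general δ hδ x y z f g hf hg p hp
end
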